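/- arXiv:math/0408393 — 6 statements merged into one kernel-verified Lean document; each statement's English description precedes it below -/
import Mathlib

section
/- Let p be a prime and let G be a finitely generated nilpotent group. If G is conjugacy F_p-separable, then the torsion subgroup τ(G) is a p-group and the quotient group G/τ(G) is abelian. -/
/-!
A torsion element whose order is prime to `p` dies in every finite `p`-group, so separating it
from `1` forces every torsion element to have `p`-power order.

For the quotient it suffices that all commutators have finite order; induct on the nilpotency
class. The last nontrivial term `C = ⁅γ, G⁆` of the lower central series is central. If some
`x ∈ γ` has a commutator of infinite order, then `g ↦ ⁅g, x⁆` maps `G` onto a finitely generated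
abelian group that is not torsion, so with `q = p + 1` some `⁅w, x⁆` is not a `q`-th power of a
commutator. Then `x ^ q` and `⁅w, x⁆ * x ^ q` are not conjugate in `G`, but they are in every
finite `p`-quotient, where `q` is invertible modulo the order of the image of `⁅w, x⁆`.
Otherwise `C` is finitely generated, central and torsion, hence finite, separability passes to
`G ⧸ C`, and the induction hypothesis applies there.
-/

open scoped commutatorElement

/-- `G` is conjugacy `F_p`-separable: whenever `a, b ∈ G` are not conjugate in `G`,
there exists a surjective homomorphism `φ` of `G` onto some finite `p`-group `X`
such that `φ a` and `φ b` are not conjugate in `X`. -/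
def IsConjFpSeparable (p : ℕ) (G : Type) [Group G] : Prop :=
  ∀ a b : G, ¬ IsConj a b →
    ∃ (X : Type) (_ : Group X) (_ : Fintype X),
      IsPGroup p X ∧
      ∃ φ : G →* X, Function.Surjective φ ∧ ¬ IsConj (φ a) (φ b)

open Subgroup

section Commutators

variable {G : Type*} [Group G]

def commutatorLeftHom (x : G) (hx : ∀ g : G, ⁅g, x⁆ ∈ center G) : G →* G where
  toFun g := ⁅g, x⁆
  map_one' := commutatorElement_one_left x
  map_mul' a b := by
    rw [commutatorElement_mul_left_eq_conj_mul, mem_center_iff.mp (hx b) a, mul_inv_cancel_right,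
      mem_center_iff.mp (hx b)]

@[simp]
lemma commutatorLeftHom_apply (x : G) (hx : ∀ g : G, ⁅g, x⁆ ∈ center G) (g : G) :
    commutatorLeftHom x hx g = ⁅g, x⁆ :=
  rfl

lemma conj_pow_eq_commutator_pow_mul_pow {g x : G} (h : Commute ⁅g, x⁆ x) (n : ℕ) :
    g * x ^ n * g⁻¹ = ⁅g, x⁆ ^ n * x ^ n := by
  rw [← conj_pow, ← MulAut.conj_apply, conj_eq_commutatorElement_mul, h.mul_pow]

lemma commutator_top_le_closure_image2 {H : Subgroup G} {S T : Set G} (hS : closure S = ⊤)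
    (hHZ : ⁅(⊤ : Subgroup G), H⁆ ≤ center G) (hTH : T ⊆ H) (hH : H ≤ closure T ⊔ center G) :
    ⁅(⊤ : Subgroup G), H⁆ ≤ closure (Set.image2 (⁅·, ·⁆) S T) := by
  set E := closure (Set.image2 (⁅·, ·⁆) S T)
  have hcentral : ∀ g : G, ∀ w ∈ closure T, ⁅g, w⁆ ∈ center G := fun g w hw =>
    hHZ (commutator_mem_commutator (mem_top g) ((closure_le H).mpr hTH hw))
  have hgen : ∀ s ∈ S, ∀ w ∈ closure T, ⁅s, w⁆ ∈ E := by
    intro s hs w hw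
    induction hw using closure_induction with
    | mem t ht => exact subset_closure (Set.mem_image2_of_mem hs ht)
    | one => simp
    | mul w₁ w₂ hw₁ hw₂ h₁ h₂ =>
      rw [commutatorElement_mul_right_eq_mul_conj, mul_assoc _ w₁,
        mem_center_iff.mp (hcentral s w₂ hw₂) w₁, mul_assoc ⁅s, w₁⁆, mul_inv_cancel_right]
      exact E.mul_mem h₁ h₂
    | inv w hw h =>
      rw [commutatorElement_inv_right, ← commutatorElement_inv, mul_assoc,
        ← mem_center_iff.mp (inv_mem (hcentral s w hw)) w, inv_mul_cancel_left]
      exact E.inv_mem h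
  have hclosure : ∀ g : G, ∀ w ∈ closure T, ⁅g, w⁆ ∈ E := by
    intro g w hw
    have hg : ⁅g, w⁆ ∈ map (commutatorLeftHom w (hcentral · w hw)) (closure S) := by
      rw [hS]; exact ⟨g, mem_top g, rfl⟩
    rw [MonoidHom.map_closure] at hg
    refine closure_le _ |>.mpr ?_ hg
    rintro _ ⟨s, hs, rfl⟩
    exact hgen s hs w hw
  rw [commutator_le]
  rintro g - u hu
  obtain ⟨w, hw, z, hz, rfl⟩ := mem_sup_of_normal_right.mp (hH hu)
  rw [commutatorElement_mul_right_eq_mul_conj,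
    commutatorElement_eq_one_iff_commute.mpr (mem_center_iff.mp hz g), mul_one,
    mul_inv_cancel_right]
  exact hclosure g w hw

lemma map_lowerCentralSeries_of_surjective {Q : Type*} [Group Q] {f : G →* Q}
    (hf : Function.Surjective f) (n : ℕ) :
    ((⊤ : Subgroup G).lowerCentralSeries n).map f = (⊤ : Subgroup Q).lowerCentralSeries n := by
  rw [map_lowerCentralSeries, map_top_of_surjective f hf]

lemma lowerCentralSeries_le_center_of_succ_eq_bot {n : ℕ}
    (h : (⊤ : Subgroup G).lowerCentralSeries (n + 1) = ⊥) :
    (⊤ : Subgroup G).lowerCentralSeries n ≤ center G :=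
  commutator_top_right_eq_bot_iff_le_center.mp h

lemma isOfFinOrder_of_mem_closure_of_le_center {s : Set G} (hs : closure s ≤ center G)
    (htors : ∀ x ∈ s, IsOfFinOrder x) {c : G} (hc : c ∈ closure s) : IsOfFinOrder c := by
  induction hc using closure_induction with
  | mem x hx => exact htors x hx
  | one => exact IsOfFinOrder.one
  | mul x y hx _ hxt hyt =>
    exact Commute.isOfFinOrder_mul (mem_center_iff.mp (hs hx) y).symm hxt hyt
  | inv x _ hxt => exact hxt.inv

open scoped IsMulCommutative in
lemma finite_of_fg_of_le_center {C : Subgroup G} (hfg : C.FG) (hZ : C ≤ center G)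
    (htors : ∀ c ∈ C, IsOfFinOrder c) : Finite C := by
  have : IsMulCommutative C := ⟨⟨fun a b => Subtype.ext (mem_center_iff.mp (hZ b.2) a)⟩⟩
  have : Group.FG C := (Group.fg_iff_subgroup_fg C).mpr hfg
  exact CommGroup.finite_of_fg_isMulTorsion C fun c =>
    (Function.Injective.isOfFinOrder_iff C.subtype_injective).mp (htors c c.2)

end Commutators

theorem fg_lowerCentralSeries_of_succ_eq_bot (n : ℕ) :
    ∀ (G : Type*) [Group G] [Group.FG G], (⊤ : Subgroup G).lowerCentralSeries (n + 1) = ⊥ →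
      ((⊤ : Subgroup G).lowerCentralSeries n).FG := by
  induction n with
  | zero => intro G _ hG _; exact Group.fg_def.mp hG
  | succ n ih =>
    intro G _ _ hbot
    set C := (⊤ : Subgroup G).lowerCentralSeries (n + 1)
    set π := QuotientGroup.mk' C
    have hπ : Function.Surjective π := QuotientGroup.mk'_surjective C
    have hQ : (⊤ : Subgroup (G ⧸ C)).lowerCentralSeries (n + 1) = ⊥ := by
      rw [← map_lowerCentralSeries_of_surjective hπ, Subgroup.map_eq_bot_iff,
        QuotientGroup.ker_mk']
    obtain ⟨T', hT', hT'fin⟩ := (fg_iff _).mp (ih (G ⧸ C) hQ)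
    rw [← map_lowerCentralSeries_of_surjective hπ] at hT'
    obtain ⟨T, hTH, hTfin, hTclosure⟩ : ∃ T ⊆ ((⊤ : Subgroup G).lowerCentralSeries n : Set G),
        T.Finite ∧ closure (π '' T) = ((⊤ : Subgroup G).lowerCentralSeries n).map π :=
      Set.exists_subset_image_finite_and (p := fun U => Subgroup.closure U = _).mp
        ⟨T', fun t ht => by rw [← coe_map, ← hT']; exact subset_closure ht, hT'fin, hT'⟩
    obtain ⟨S, hS, hSfin⟩ := Group.fg_iff.mp ‹_›
    have hC : C = ⁅(⊤ : Subgroup G), (⊤ : Subgroup G).lowerCentralSeries n⁆ :=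
      commutator_comm _ _
    have hCZ : C ≤ center G := lowerCentralSeries_le_center_of_succ_eq_bot hbot
    have hlift : (⊤ : Subgroup G).lowerCentralSeries n ≤ closure T ⊔ center G :=
      calc (⊤ : Subgroup G).lowerCentralSeries n
          ≤ (((⊤ : Subgroup G).lowerCentralSeries n).map π).comap π := le_comap_map _ _
        _ = closure T ⊔ C := by
          rw [← hTclosure, ← MonoidHom.map_closure, comap_map_eq, QuotientGroup.ker_mk']
        _ ≤ closure T ⊔ center G := sup_le_sup_left hCZ _
    refine (fg_iff _).mpr ⟨_, ?_, hSfin.image2 (⁅·, ·⁆) hTfin⟩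
    refine le_antisymm ?_ ?_
    · rw [closure_le]
      rintro _ ⟨s, -, t, ht, rfl⟩
      exact hC ▸ commutator_mem_commutator (mem_top s) (hTH ht)
    · exact hC ▸ commutator_top_le_closure_image2 hS (hC ▸ hCZ) hTH hlift

theorem CommGroup.isMulTorsion_of_surjective_pow {K : Type*} [CommGroup K] [Group.FG K] {n : ℕ}
    (hn : n ≠ 1) (h : Function.Surjective fun x : K => x ^ n) : IsMulTorsion K := by
  have : Module.Finite ℤ (Additive K) :=
    Module.Finite.iff_addGroup_fg.mpr (GroupFG.iff_add_fg.mp ‹_›)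
  have hdiv : (⊤ : Submodule ℤ (Additive K)) ≤ Ideal.span {(n : ℤ)} • ⊤ := by
    intro a _
    obtain ⟨c, hc⟩ := h a.toMul
    rw [show a = (n : ℤ) • Additive.ofMul c from Additive.toMul.injective (by simpa using hc.symm)]
    exact Submodule.smul_mem_smul (Ideal.mem_span_singleton_self _) trivial
  -- Nakayama's lemma over `ℤ`: `M = n • M` forces `r • M = 0` for some `r ≡ 1 [ZMOD n]`.
  obtain ⟨r, hr1, hr⟩ := Submodule.exists_sub_one_mem_and_smul_eq_zero_of_fg_of_le_smul _ ⊤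
    (Module.finite_def.mp ‹_›) hdiv
  have hr0 : r ≠ 0 := by
    rintro rfl
    have : (n : ℤ) ∣ 1 := by simpa using Ideal.mem_span_singleton.mp hr1
    exact hn (by exact_mod_cast Int.eq_one_of_dvd_one (Int.natCast_nonneg n) this)
  intro x
  exact isOfFinOrder_iff_zpow_eq_one.mpr ⟨r, hr0, congrArg Additive.toMul (hr (.ofMul x) trivial)⟩

theorem IsPGroup.pi {p : ℕ} {ι : Type*} [Finite ι] {X : ι → Type*} [∀ i, Group (X i)]
    (h : ∀ i, IsPGroup p (X i)) : IsPGroup p (∀ i, X i) := by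
  intro f
  choose k hk using fun i => h i (f i)
  have := Fintype.ofFinite ι
  refine ⟨Finset.univ.sup k, funext fun i => ?_⟩
  exact orderOf_dvd_iff_pow_eq_one.mp <| (orderOf_dvd_of_pow_eq_one (hk i)).trans <|
    pow_dvd_pow p (Finset.le_sup (Finset.mem_univ i))

lemma exists_mem_ker_isConj_mul_of_isConj_map {G H : Type*} [Group G] [Group H] {f : G →* H}
    (hf : Function.Surjective f) {a b : G} (h : IsConj (f a) (f b)) :
    ∃ k ∈ f.ker, IsConj a (b * k) := by
  obtain ⟨_, hc⟩ := isConj_iff.mp h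
  obtain ⟨g, rfl⟩ := hf ‹_›
  refine ⟨b⁻¹ * (g * a * g⁻¹), ?_, isConj_iff.mpr ⟨g, by group⟩⟩
  rw [MonoidHom.mem_ker, map_mul, map_mul, map_mul, map_inv, map_inv, hc, inv_mul_cancel]

namespace IsConjFpSeparable

variable {p : ℕ} {G : Type} [Group G]

theorem eq_one_of_pow_eq_one (h : IsConjFpSeparable p G) {n : ℕ} (hn : p.Coprime n) {g : G}
    (hg : g ^ n = 1) : g = 1 := by
  by_contra hg1
  obtain ⟨X, _, _, hX, φ, -, hφ⟩ := h g 1 (mt isConj_one_left.mp hg1)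
  apply hφ
  rw [map_one, isConj_one_left, ← orderOf_eq_one_iff]
  exact (hX.orderOf_coprime hn _).eq_one_of_dvd
    (orderOf_dvd_of_pow_eq_one (by rw [← map_pow, hg, map_one]))

theorem exists_pow_prime_pow_eq_one (hp : p.Prime) (h : IsConjFpSeparable p G) {g : G}
    (hg : IsOfFinOrder g) : ∃ k, g ^ p ^ k = 1 := by
  obtain ⟨k, m, hpm, hkm⟩ := Nat.exists_eq_pow_mul_and_not_dvd hg.orderOf_pos.ne' p hp.ne_one
  refine ⟨k, h.eq_one_of_pow_eq_one ((Nat.Prime.coprime_iff_not_dvd hp).mpr hpm) ?_⟩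
  rw [← pow_mul, ← hkm, pow_orderOf_eq_one]

theorem quotient (h : IsConjFpSeparable p G) (C : Subgroup G) [C.Normal] [Finite C] :
    IsConjFpSeparable p (G ⧸ C) := by
  intro a' b' hab
  obtain ⟨a, rfl⟩ := QuotientGroup.mk_surjective a'
  obtain ⟨b, rfl⟩ := QuotientGroup.mk_surjective b'
  have hsep (c : C) : ¬IsConj a (b * c) := fun hc => hab <| by
    simpa using (QuotientGroup.mk' C).map_isConj hc
  -- One separating map for each of the finitely many lifts `b * c`, combined into a product.
  choose X _ _ hX φ _ hφ using fun c : C => h a (b * c) (hsep c)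
  set Φ := MonoidHom.pi φ
  set N := C.map Φ.rangeRestrict
  have : N.Normal := .map ‹_› _ Φ.rangeRestrict_surjective
  set χ := (QuotientGroup.mk' N).comp Φ.rangeRestrict
  have hχ : Function.Surjective χ :=
    (QuotientGroup.mk'_surjective N).comp Φ.rangeRestrict_surjective
  have hCχ : C ≤ χ.ker := fun c hc => (QuotientGroup.eq_one_iff _).mpr (mem_map_of_mem _ hc)
  refine ⟨Φ.range ⧸ N, inferInstance, Fintype.ofFinite _,
    ((IsPGroup.pi hX).to_subgroup _).to_quotient N, QuotientGroup.lift C χ hCχ,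
    QuotientGroup.lift_surjective_of_surjective _ _ hχ _, fun hconj => ?_⟩
  obtain ⟨k, hk, hconj⟩ := exists_mem_ker_isConj_mul_of_isConj_map hχ hconj
  obtain ⟨c, hc, hck⟩ := (QuotientGroup.eq_one_iff _).mp hk
  have hφk : φ ⟨c, hc⟩ c = φ ⟨c, hc⟩ k := congrFun (congrArg Subtype.val hck) ⟨c, hc⟩
  apply hφ ⟨c, hc⟩
  simpa [hφk] using (φ ⟨c, hc⟩).map_isConj hconj

open scoped IsMulCommutative in
theorem isOfFinOrder_commutator_of_mem_center (hp : p ≠ 0) (h : IsConjFpSeparable p G)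
    [Group.FG G] {x : G} (hx : ∀ g : G, ⁅g, x⁆ ∈ center G) (g : G) : IsOfFinOrder ⁅g, x⁆ := by
  have hcomm (u : G) : Commute ⁅u, x⁆ x := (mem_center_iff.mp (hx u) x).symm
  set F := (commutatorLeftHom x hx).codRestrict (center G) hx
  by_contra hg
  have hF : ¬IsMulTorsion F.range := fun hF =>
    hg ((center G).subtype.isOfFinOrder (F.range.subtype.isOfFinOrder (hF ⟨F g, g, rfl⟩)))
  have hnotsurj : ¬Function.Surjective fun c : F.range => c ^ (p + 1) :=
    fun hsurj => hF (CommGroup.isMulTorsion_of_surjective_pow (by omega) hsurj)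
  obtain ⟨⟨_, w, rfl⟩, hw⟩ := not_forall.mp hnotsurj
  have hnotpow (u : G) : ⁅u, x⁆ ^ (p + 1) ≠ ⁅w, x⁆ := fun hu =>
    hw ⟨⟨F u, u, rfl⟩, Subtype.ext (Subtype.ext hu)⟩
  have hnc : ¬IsConj (x ^ (p + 1)) (⁅w, x⁆ * x ^ (p + 1)) := fun hconj => by
    obtain ⟨u, hu⟩ := isConj_iff.mp hconj
    rw [conj_pow_eq_commutator_pow_mul_pow (hcomm u)] at hu
    exact hnotpow u (mul_right_cancel hu)
  obtain ⟨X, _, _, hX, φ, -, hφ⟩ := h _ _ hnc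
  have hpq : p.Coprime (p + 1) := Nat.coprime_self_add_right.mpr (Nat.coprime_one_right p)
  obtain ⟨m, hm⟩ := exists_pow_eq_self_of_coprime (hX.orderOf_coprime hpq (φ ⁅w, x⁆)).symm
  refine hφ (isConj_iff.mpr ⟨φ (w ^ m), ?_⟩)
  have hwm : ⁅w ^ m, x⁆ = ⁅w, x⁆ ^ m := map_pow (commutatorLeftHom x hx) w m
  rw [← map_inv, ← map_mul, ← map_mul, conj_pow_eq_commutator_pow_mul_pow (hcomm _), hwm, map_mul,
    map_pow, map_pow, ← pow_mul, mul_comm, pow_mul, hm, map_mul]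

theorem isOfFinOrder_commutator_of_lowerCentralSeries_eq_bot (hp : p ≠ 0) (n : ℕ) :
    ∀ (G : Type) [Group G] [Group.FG G], (⊤ : Subgroup G).lowerCentralSeries (n + 1) = ⊥ →
      IsConjFpSeparable p G → ∀ g₁ g₂ : G, IsOfFinOrder ⁅g₁, g₂⁆ := by
  induction n with
  | zero =>
    intro G _ _ hbot _ g₁ g₂
    have : ⁅g₁, g₂⁆ ∈ (⊤ : Subgroup G).lowerCentralSeries 1 :=
      commutator_mem_commutator (mem_top g₁) (mem_top g₂)
    rw [hbot, mem_bot] at this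
    exact this ▸ IsOfFinOrder.one
  | succ n ih =>
    intro G _ _ hbot h g₁ g₂
    set C := (⊤ : Subgroup G).lowerCentralSeries (n + 1)
    have hCZ : C ≤ center G := lowerCentralSeries_le_center_of_succ_eq_bot hbot
    have hCtors : ∀ c ∈ C, IsOfFinOrder c := by
      refine fun c hc => isOfFinOrder_of_mem_closure_of_le_center hCZ ?_ hc
      rintro _ ⟨x, hx, g, -, rfl⟩
      have hxZ (g : G) : ⁅g, x⁆ ∈ center G :=
        hCZ (commutatorElement_inv x g ▸ inv_mem (commutator_mem_commutator hx (mem_top g)))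
      rw [← commutatorElement_inv]
      exact (h.isOfFinOrder_commutator_of_mem_center hp hxZ g).inv
    have : Finite C :=
      finite_of_fg_of_le_center (fg_lowerCentralSeries_of_succ_eq_bot _ G hbot) hCZ hCtors
    have hQ : (⊤ : Subgroup (G ⧸ C)).lowerCentralSeries (n + 1) = ⊥ := by
      rw [← map_lowerCentralSeries_of_surjective (QuotientGroup.mk'_surjective C),
        Subgroup.map_eq_bot_iff, QuotientGroup.ker_mk']
    obtain ⟨k, hk, hpow⟩ := isOfFinOrder_iff_pow_eq_one.mp (ih (G ⧸ C) hQ (h.quotient C) g₁ g₂)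
    have hmem : ⁅g₁, g₂⁆ ^ k ∈ C := (QuotientGroup.eq_one_iff _).mp hpow
    exact (hCtors _ hmem).of_pow hk.ne'

theorem isOfFinOrder_commutator [Group.FG G] [Group.IsNilpotent G] (hp : p ≠ 0)
    (h : IsConjFpSeparable p G) (g₁ g₂ : G) : IsOfFinOrder ⁅g₁, g₂⁆ := by
  obtain ⟨n, hn⟩ := Subgroup.nilpotent_iff_lowerCentralSeries.mp ‹_›
  have hbot := eq_bot_mono (Subgroup.lowerCentralSeries_antitone _ n.le_succ) hn
  exact isOfFinOrder_commutator_of_lowerCentralSeries_eq_bot hp n G hbot h g₁ g₂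

end IsConjFpSeparable

/-- Let `p` be a prime and `G` a finitely generated nilpotent group, with torsion
subgroup `τ`. If `G` is conjugacy `F_p`-separable, then `τ` is a `p`-group and
`G ⧸ τ` is abelian. -/
theorem torsion_isPGroup_and_quotient_comm_of_conjFpSeparable
    (p : ℕ) (hp : p.Prime) (G : Type) [Group G] [Group.FG G] [Group.IsNilpotent G]
    (τ : Subgroup G) [τ.Normal] (hτ : ∀ g : G, g ∈ τ ↔ IsOfFinOrder g)
    (h : IsConjFpSeparable p G) :
    IsPGroup p τ ∧ ∀ x y : G ⧸ τ, x * y = y * x := by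
  refine ⟨fun g => ?_, fun x y => ?_⟩
  · obtain ⟨k, hk⟩ := h.exists_pow_prime_pow_eq_one hp ((hτ g).mp g.2)
    exact ⟨k, Subtype.ext hk⟩
  · obtain ⟨g₁, rfl⟩ := QuotientGroup.mk_surjective x
    obtain ⟨g₂, rfl⟩ := QuotientGroup.mk_surjective y
    have hτcomm : ⁅g₁, g₂⁆ ∈ τ := (hτ _).mpr (h.isOfFinOrder_commutator hp.ne_zero g₁ g₂)
    exact commutatorElement_eq_one_iff_mul_comm.mp ((QuotientGroup.eq_one_iff _).mpr hτcomm)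
end

section
/- Let p be a prime and let G be a finitely generated torsion-free nilpotent group. Then G is conjugacy F_p-separable if and only if G is abelian. -/
open Function Subgroup
open scoped commutatorElement IsMulCommutative

theorem CommGroup.exists_surjective_int_ne_one {A : Type*} [CommGroup A] [Group.FG A]
    [IsMulTorsionFree A] {a : A} (ha : a ≠ 1) :
    ∃ f : A →* Multiplicative ℤ, Surjective f ∧ f a ≠ 1 := by
  let B := Module.Free.chooseBasis ℤ (Additive A)
  obtain ⟨i, hi⟩ : ∃ i, B.repr (.ofMul a) i ≠ 0 := by
    by_contra! h
    exact ha <| by simpa using (map_eq_zero_iff B.repr B.repr.injective).mp (Finsupp.ext h)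
  refine ⟨AddMonoidHom.toMultiplicativeRight (B.coord i).toAddMonoidHom,
    fun n => ⟨(n.toAdd • B i).toMul, ?_⟩, by simpa using hi⟩
  simp

theorem CommGroup.exists_forall_pow_ne {A : Type*} [CommGroup A] [Group.FG A]
    [IsMulTorsionFree A] [Nontrivial A] {q : ℕ} (hq : q ≠ 1) :
    ∃ z : A, ∀ w : A, w ^ q ≠ z := by
  obtain ⟨a, ha⟩ := exists_ne (1 : A)
  obtain ⟨f, hf, -⟩ := exists_surjective_int_ne_one ha
  obtain ⟨z, hz⟩ := hf (.ofAdd 1)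
  refine ⟨z, fun w hw => hq ?_⟩
  have : (q : ℤ) * (f w).toAdd = 1 := by
    simpa [← hw] using congrArg Multiplicative.toAdd hz
  exact_mod_cast Int.eq_one_of_mul_eq_one_right (Int.natCast_nonneg q) this

theorem CommGroup.exists_surjective_zmod_pow_ne_one {A : Type*} [CommGroup A] [Group.FG A]
    [IsMulTorsionFree A] {p : ℕ} (hp : 1 < p) {a : A} (ha : a ≠ 1) :
    ∃ (k : ℕ) (φ : A →* Multiplicative (ZMod (p ^ k))), Surjective φ ∧ φ a ≠ 1 := by
  obtain ⟨f, hf, hfa⟩ := exists_surjective_int_ne_one ha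
  set n := (f a).toAdd
  have hn : n ≠ 0 := hfa
  refine ⟨n.natAbs, (AddMonoidHom.toMultiplicative (Int.castAddHom _)).comp f, ?_, ?_⟩
  · rw [MonoidHom.coe_comp]
    refine Surjective.comp ?_ hf
    simpa using Multiplicative.ofAdd.surjective.comp
      (ZMod.intCast_surjective.comp Multiplicative.toAdd.surjective)
  · intro h
    have hdvd : ((p ^ n.natAbs : ℕ) : ℤ) ∣ n :=
      (ZMod.intCast_zmod_eq_zero_iff_dvd _ _).mp (by simpa using h)
    exact (Nat.lt_pow_self hp).not_ge
      (Nat.le_of_dvd (Int.natAbs_pos.mpr hn) (Int.natCast_dvd.mp hdvd))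

theorem isConjFpSeparable_of_commGroup {p : ℕ} (hp : 1 < p) (A : Type) [CommGroup A] [Group.FG A]
    [IsMulTorsionFree A] : IsConjFpSeparable p A := by
  intro a b hab
  have hne : a / b ≠ 1 := div_ne_one.mpr (by rintro rfl; exact hab (.refl a))
  obtain ⟨k, φ, hφ, hφab⟩ := CommGroup.exists_surjective_zmod_pow_ne_one hp hne
  have : NeZero (p ^ k) := ⟨by positivity⟩
  refine ⟨_, _, inferInstance, .of_card (n := k) (by simp), φ, hφ, fun h => hφab ?_⟩
  rw [map_div, isConj_iff_eq.mp h, div_self']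

theorem Subgroup.exists_notMem_center_forall_commutator_mem_center {G : Type*} [Group G]
    [Group.IsNilpotent G] (hG : center G ≠ ⊤) :
    ∃ x ∉ center G, ∀ g : G, ⁅g, x⁆ ∈ center G := by
  have hlt : upperCentralSeries G 1 < upperCentralSeries G 2 :=
    (upperCentralSeries_mono G (by norm_num)).lt_of_ne fun h =>
      hG (upperCentralSeries_one G ▸ upperCentralSeries.eq_top (by norm_num) h)
  obtain ⟨x, hx2, hx1⟩ := SetLike.exists_of_lt hlt
  rw [upperCentralSeries_one] at hx1
  refine ⟨x, hx1, fun g => ?_⟩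
  rw [← commutatorElement_inv, ← upperCentralSeries_one]
  exact inv_mem (mem_upperCentralSeries_succ_iff.mp hx2 g)

section CentralCommutator

variable {G : Type*} [Group G] {x : G}

def centralCommutatorHom (hx : ∀ g : G, ⁅g, x⁆ ∈ center G) : G →* center G where
  toFun g := ⟨⁅g, x⁆, hx g⟩
  map_one' := by ext; simp
  map_mul' g h := by
    ext
    have hc := mem_center_iff.mp (hx h)
    calc ⁅g * h, x⁆ = g * ⁅h, x⁆ * (x * g⁻¹ * x⁻¹) := by
          simp only [commutatorElement_def]; group
      _ = ⁅h, x⁆ * ⁅g, x⁆ := by rw [hc g, commutatorElement_def g]; group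
      _ = ⁅g, x⁆ * ⁅h, x⁆ := (hc _).symm

theorem conj_pow_eq_commutator_pow_mul (hx : ∀ g : G, ⁅g, x⁆ ∈ center G) (g : G) (n : ℕ) :
    g * x ^ n * g⁻¹ = ⁅g, x⁆ ^ n * x ^ n := by
  have hcomm : Commute ⁅g, x⁆ x := ((mem_center_iff.mp (hx g)) x).symm
  rw [← hcomm.mul_pow, commutatorElement_def, ← conj_pow]
  group

theorem not_isConj_pow_mul_pow (hx : ∀ g : G, ⁅g, x⁆ ∈ center G) {q : ℕ} {z : G}
    (hz : ∀ g : G, ⁅g, x⁆ ^ q ≠ z) : ¬ IsConj (x ^ q) (z * x ^ q) := by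
  rw [isConj_iff]
  rintro ⟨g, hg⟩
  rw [conj_pow_eq_commutator_pow_mul hx] at hg
  exact hz g (mul_right_cancel hg)

theorem isConj_map_pow_mul_pow (hx : ∀ g : G, ⁅g, x⁆ ∈ center G) {p q : ℕ}
    (hpq : p.Coprime q) {X : Type*} [Group X] (hX : IsPGroup p X) (φ : G →* X) (g : G) :
    IsConj (φ (x ^ q)) (φ (⁅g, x⁆ * x ^ q)) := by
  obtain ⟨m, hm⟩ := exists_pow_eq_self_of_coprime (hX.orderOf_coprime hpq (φ ⁅g, x⁆)).symm
  have hgm : ⁅g ^ m, x⁆ = ⁅g, x⁆ ^ m :=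
    congrArg Subtype.val (map_pow (centralCommutatorHom hx) g m)
  refine isConj_iff.mpr ⟨φ (g ^ m), ?_⟩
  rw [← map_inv, ← map_mul, ← map_mul, conj_pow_eq_commutator_pow_mul hx, hgm, ← pow_mul,
    mul_comm m, pow_mul]
  simp only [map_mul, map_pow, hm]

end CentralCommutator

theorem commute_of_isConjFpSeparable {p : ℕ} (hp : p.Prime) {G : Type} [Group G] [Group.FG G]
    [Group.IsNilpotent G] (htf : ∀ g : G, g ≠ 1 → ¬ IsOfFinOrder g)
    (hG : IsConjFpSeparable p G) (a b : G) : a * b = b * a := by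
  by_contra hab
  have hZ : center G ≠ ⊤ := fun h => hab (mem_center_iff.mp (h ▸ mem_top b) a)
  obtain ⟨x, hxZ, hx⟩ := exists_notMem_center_forall_commutator_mem_center hZ
  set ψ := centralCommutatorHom hx
  have : Nontrivial ψ.range := by
    rw [nontrivial_iff_ne_bot, Ne, MonoidHom.range_eq_bot_iff]
    refine fun hψ => hxZ (mem_center_iff.mpr fun g => ?_)
    exact commutatorElement_eq_one_iff_mul_comm.mp
      (congrArg Subtype.val (DFunLike.congr_fun hψ g))
  have : IsMulTorsionFree ψ.range := .of_not_isOfFinOrder fun w hw (hfin : IsOfFinOrder w) =>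
    htf ((w : center G) : G) (by simpa using hw)
      (((center G).subtype.comp ψ.range.subtype).isOfFinOrder hfin)
  obtain ⟨q, hpq, hq⟩ := Nat.exists_infinite_primes (p + 1)
  obtain ⟨⟨_, g, rfl⟩, hz⟩ := CommGroup.exists_forall_pow_ne (A := ψ.range) hq.one_lt.ne'
  have hnc : ¬ IsConj (x ^ q) (⁅g, x⁆ * x ^ q) :=
    not_isConj_pow_mul_pow hx fun g' h => hz ⟨ψ g', g', rfl⟩ (by ext; exact h)
  obtain ⟨X, _, _, hX, φ, -, hφ⟩ := hG _ _ hnc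
  exact hφ (isConj_map_pow_mul_pow hx ((Nat.coprime_primes hp hq).mpr (by omega)) hX φ g)

/-- Let `p` be a prime and `G` a finitely generated torsion-free nilpotent group.
Then `G` is conjugacy `F_p`-separable iff `G` is abelian. -/
theorem conjFpSeparable_iff_comm_of_torsionFree
    (p : ℕ) (hp : p.Prime) (G : Type) [Group G] [Group.FG G] [Group.IsNilpotent G]
    (htf : ∀ g : G, g ≠ 1 → ¬ IsOfFinOrder g) :
    IsConjFpSeparable p G ↔ ∀ x y : G, x * y = y * x := by
  refine ⟨commute_of_isConjFpSeparable hp htf, fun hcomm => ?_⟩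
  have : IsMulCommutative G := .of_comm hcomm
  have : IsMulTorsionFree G := .of_not_isOfFinOrder fun g => htf g
  exact isConjFpSeparable_of_commGroup hp.one_lt G
end

section
/- (Proposition 1, specialized to the class of finite p-groups) Let p be a prime, G a group and N a normal subgroup of G. The quotient group G/N is conjugacy F_p-separable if and only if every coset of G modulo N is conjugacy F_p-separable in G. -/
/-- A subset `M` of a group `G` is conjugacy `F_p`-separable in `G`: whenever `a ∈ G`
is not conjugate in `G` to any element of `M`, there exists a surjective homomorphism
`φ` of `G` onto some finite `p`-group `X` such that `φ a` is not conjugate in `X` to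
any element of the image `φ '' M`. -/
def SetIsConjFpSeparable (p : ℕ) {G : Type} [Group G] (M : Set G) : Prop :=
  ∀ a : G, (∀ m ∈ M, ¬ IsConj a m) →
    ∃ (X : Type) (_ : Group X) (_ : Fintype X),
      IsPGroup p X ∧
      ∃ φ : G →* X, Function.Surjective φ ∧ ∀ x ∈ φ '' M, ¬ IsConj (φ a) x

/-! Conjugacy of `a N` and `b N` in `G ⧸ N` means exactly that `a` is conjugate in `G` to some
element of the coset `b N`. Hence a finite `p`-quotient of `G ⧸ N` separating `a N` from `b N`
pulls back to one of `G` separating `a` from `b N`; conversely, if `ψ : G ↠ X` separates `a`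
from `b N`, then `G ⧸ N ↠ X ⧸ ψ(N)` separates `a N` from `b N`, by the same criterion in `X`. -/

namespace QuotientGroup

variable {G : Type*} [Group G] {N : Subgroup G}

theorem isConj_mk_iff_exists_isConj_mem_coset [N.Normal] {a b : G} :
    IsConj (a : G ⧸ N) (b : G ⧸ N) ↔
      ∃ m ∈ (fun n => b * n) '' (N : Set G), IsConj a m := by
  constructor
  · rw [isConj_iff]
    rintro ⟨c, hc⟩
    obtain ⟨g, rfl⟩ := mk_surjective c
    have hmem : b⁻¹ * (g * a * g⁻¹) ∈ N := QuotientGroup.eq.mp hc.symm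
    exact ⟨_, ⟨_, hmem, rfl⟩, isConj_iff.mpr ⟨g, by group⟩⟩
  · rintro ⟨_, ⟨n, hn, rfl⟩, hconj⟩
    simpa [mk_mul_of_mem b hn] using (mk' N).map_isConj hconj

theorem not_isConj_mk_map_of_forall_not_isConj {X : Type*} [Group X] (ψ : G →* X)
    [(N.map ψ).Normal] {a b : G}
    (hsep : ∀ x ∈ ψ '' ((fun n => b * n) '' (N : Set G)), ¬ IsConj (ψ a) x) :
    ¬ IsConj (ψ a : X ⧸ N.map ψ) (ψ b : X ⧸ N.map ψ) := by
  rw [isConj_mk_iff_exists_isConj_mem_coset]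
  rintro ⟨_, ⟨_, ⟨n, hn, rfl⟩, rfl⟩, hconj⟩
  exact hsep _ ⟨b * n, ⟨n, hn, rfl⟩, map_mul ψ b n⟩ hconj

end QuotientGroup

open QuotientGroup in
theorem quotient_conjFpSeparable_iff_cosets_setConjFpSeparable_general
    (p : ℕ) (G : Type) [Group G] (N : Subgroup G) [N.Normal] :
    IsConjFpSeparable p (G ⧸ N) ↔
      ∀ b : G, SetIsConjFpSeparable p ((fun n => b * n) '' (N : Set G)) := by
  constructor
  · intro hsep b a ha
    obtain ⟨X, _, _, hX, φ, hφ, hab⟩ :=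
      hsep a b fun hc ↦
        let ⟨m, hm, hconj⟩ := isConj_mk_iff_exists_isConj_mem_coset.mp hc; ha m hm hconj
    refine ⟨X, ‹_›, ‹_›, hX, φ.comp (mk' N), hφ.comp (mk'_surjective N), ?_⟩
    rintro _ ⟨_, ⟨n, hn, rfl⟩, rfl⟩
    simpa [mk_mul_of_mem b hn] using hab
  · intro hsep a b hab
    induction a using QuotientGroup.induction_on with | H a => ?_
    induction b using QuotientGroup.induction_on with | H b => ?_
    obtain ⟨X, _, _, hX, ψ, hψ, hab'⟩ :=
      hsep b a fun m hm hconj ↦ hab (isConj_mk_iff_exists_isConj_mem_coset.mpr ⟨m, hm, hconj⟩)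
    have : (N.map ψ).Normal := Subgroup.Normal.map inferInstance ψ hψ
    refine ⟨X ⧸ N.map ψ, inferInstance, Fintype.ofFinite _, hX.to_quotient _,
      map N _ ψ (Subgroup.le_comap_map ψ N),
      map_surjective_of_surjective _ _ ψ (mk_surjective.comp hψ) _,
      not_isConj_mk_map_of_forall_not_isConj ψ hab'⟩

/-- (Proposition 1 for the class of finite `p`-groups) Let `p` be a prime, `G` a group
and `N` a normal subgroup of `G`. The quotient `G ⧸ N` is conjugacy `F_p`-separable
iff every coset `b * N` of `G` modulo `N` is conjugacy `F_p`-separable in `G`. -/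
theorem quotient_conjFpSeparable_iff_cosets_setConjFpSeparable
    (p : ℕ) (hp : p.Prime) (G : Type) [Group G] (N : Subgroup G) [N.Normal] :
    IsConjFpSeparable p (G ⧸ N) ↔
      ∀ b : G, SetIsConjFpSeparable p ((fun n => b * n) '' (N : Set G)) :=
  quotient_conjFpSeparable_iff_cosets_setConjFpSeparable_general p G N
end

section
/- Let G be a group, let a, b, c ∈ G with c in the center of G, c ≠ 1, and b⁻¹ab = ac. Suppose that every conjugate of a lies in the coset a·Z(G) (i.e., for every g ∈ G there is z ∈ Z(G) with g⁻¹ag = az), and suppose that q and n are such that the equation x^(q^n) = c has no solution x in the center Z(G). Then the elements a^(q^n) and a^(q^n)·c are not conjugate in G. -/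
/-! If every conjugate of `a` lies in `a Z(G)`, say `g a g⁻¹ = a z`, then `g aᵏ g⁻¹ = (a z)ᵏ = aᵏ zᵏ`
because `z` is central. So a conjugation taking `aᵏ` to `aᵏ c` exhibits `c = zᵏ` as a `k`-th power
in the center. -/

open Subgroup

theorem conj_pow_eq_mul_pow_of_conj_eq_mul_mem_center {G : Type*} [Group G] {a g z : G}
    (hz : z ∈ center G) (h : g * a * g⁻¹ = a * z) (k : ℕ) :
    g * a ^ k * g⁻¹ = a ^ k * z ^ k := by
  rw [← conj_pow, h, Commute.mul_pow (mem_center_iff.mp hz a)]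

theorem exists_mem_center_pow_eq_of_isConj_pow {G : Type*} [Group G] {a c : G}
    (ha : ∀ g : G, ∃ z ∈ center G, g⁻¹ * a * g = a * z) {k : ℕ}
    (h : IsConj (a ^ k) (a ^ k * c)) : ∃ z ∈ center G, z ^ k = c := by
  obtain ⟨g, hg⟩ := isConj_iff.mp h
  obtain ⟨z, hz, hza⟩ := ha g⁻¹
  rw [inv_inv] at hza
  refine ⟨z, hz, mul_left_cancel (a := a ^ k) ?_⟩
  rw [← conj_pow_eq_mul_pow_of_conj_eq_mul_mem_center hz hza, hg]

theorem not_isConj_pow_of_not_pow_eq_center_general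
    (G : Type) [Group G] (a c : G)
    (ha : ∀ g : G, ∃ z ∈ Subgroup.center G, g⁻¹ * a * g = a * z)
    (q n : ℕ) (hqc : ¬ ∃ x ∈ Subgroup.center G, x ^ q ^ n = c) :
    ¬ IsConj (a ^ q ^ n) (a ^ q ^ n * c) :=
  fun h => hqc (exists_mem_center_pow_eq_of_isConj_pow ha h)

/-- Let `G` be a group, `a b c ∈ G` with `c` central, `c ≠ 1` and `b⁻¹ * a * b = a * c`.
Suppose every conjugate of `a` lies in the coset `a • Z(G)`, and that `x ^ q ^ n = c`
has no solution `x` in the center `Z(G)`. Then `a ^ q ^ n` and `a ^ q ^ n * c` are not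
conjugate in `G`. -/
theorem not_isConj_pow_of_not_pow_eq_center
    (G : Type) [Group G] (a b c : G)
    (hc : c ∈ Subgroup.center G) (hc1 : c ≠ 1) (hb : b⁻¹ * a * b = a * c)
    (ha : ∀ g : G, ∃ z ∈ Subgroup.center G, g⁻¹ * a * g = a * z)
    (q n : ℕ) (hqc : ¬ ∃ x ∈ Subgroup.center G, x ^ q ^ n = c) :
    ¬ IsConj (a ^ q ^ n) (a ^ q ^ n * c) :=
  not_isConj_pow_of_not_pow_eq_center_general G a c ha q n hqc
end

section
/- Let p and q be distinct primes, n ≥ 1 an integer, and let G be a group with elements a, b, c such that c lies in the center of G and b⁻¹ab = ac. Then for every homomorphism ψ from G to a finite p-group P, the images ψ(a^(q^n)) and ψ(a^(q^n)·c) are conjugate in P. -/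
/-! If `y` conjugates `x` to `x * z` with `z` central, then `y ^ k` conjugates `x ^ m` to
`x ^ m * z ^ (k * m)`. In a `p`-group the order of `z` is prime to `m = q ^ n`, so `z` is a power
of `z ^ m`, and a suitable `k` makes `z ^ (k * m) = z`. -/

section ConjEqMulCommute

variable {G : Type*} [Group G] {x y z : G}

theorem conj_pow_eq_mul_pow_of_conj_eq_mul (hyz : Commute y z) (h : y⁻¹ * x * y = x * z)
    (k : ℕ) : (y ^ k)⁻¹ * x * y ^ k = x * z ^ k := by
  induction k with
  | zero => simp
  | succ k ih =>
    calc (y ^ (k + 1))⁻¹ * x * y ^ (k + 1) = y⁻¹ * ((y ^ k)⁻¹ * x * y ^ k) * y := by group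
      _ = y⁻¹ * x * y * z ^ k := by
        rw [ih]; simp only [mul_assoc, (hyz.pow_right k).eq]
      _ = x * z ^ (k + 1) := by rw [h, pow_succ', mul_assoc]

theorem conj_pow_pow_eq_of_conj_eq_mul (hxz : Commute x z) (hyz : Commute y z)
    (h : y⁻¹ * x * y = x * z) (k m : ℕ) : (y ^ k)⁻¹ * x ^ m * y ^ k = x ^ m * z ^ (k * m) := by
  calc (y ^ k)⁻¹ * x ^ m * y ^ k = ((y ^ k)⁻¹ * x * y ^ k) ^ m := by
        simpa using (conj_pow (a := (y ^ k)⁻¹) (b := x) (i := m)).symm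
    _ = x ^ m * z ^ (k * m) := by
        rw [conj_pow_eq_mul_pow_of_conj_eq_mul hyz h, (hxz.pow_right k).mul_pow, pow_mul]

theorem isConj_pow_mul_of_conj_eq_mul (hxz : Commute x z) (hyz : Commute y z)
    (h : y⁻¹ * x * y = x * z) {m : ℕ} (hm : m.Coprime (orderOf z)) :
    IsConj (x ^ m) (x ^ m * z) := by
  obtain ⟨k, hk⟩ := exists_pow_eq_self_of_coprime hm
  refine isConj_iff.mpr ⟨(y ^ k)⁻¹, ?_⟩
  rw [inv_inv, conj_pow_pow_eq_of_conj_eq_mul hxz hyz h, mul_comm k, pow_mul, hk]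

end ConjEqMulCommute

theorem isConj_image_pow_in_finite_pGroup_general
    (p q : ℕ) (hp : p.Prime) (hq : q.Prime) (hpq : p ≠ q) (n : ℕ)
    (G : Type) [Group G] (a b c : G)
    (hc : c ∈ Subgroup.center G) (hb : b⁻¹ * a * b = a * c)
    (P : Type) [Group P] (hP : IsPGroup p P) (ψ : G →* P) :
    IsConj (ψ (a ^ q ^ n)) (ψ (a ^ q ^ n * c)) := by
  have hcentral : ∀ g : G, Commute (ψ g) (ψ c) := fun g =>
    Commute.map (Subgroup.mem_center_iff.mp hc g) ψ
  have hψb : (ψ b)⁻¹ * ψ a * ψ b = ψ a * ψ c := by simpa using congrArg ψ hb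
  have hcoprime : (q ^ n).Coprime (orderOf (ψ c)) :=
    (hP.orderOf_coprime (((Nat.coprime_primes hp hq).mpr hpq).pow_right n) (ψ c)).symm
  rw [map_mul, map_pow]
  exact isConj_pow_mul_of_conj_eq_mul (hcentral a) (hcentral b) hψb hcoprime

/-- Let `p` and `q` be distinct primes, `n ≥ 1`, and let `G` be a group with elements
`a b c` such that `c` is central and `b⁻¹ * a * b = a * c`. Then for every homomorphism
`ψ` of `G` to a finite `p`-group `P`, the images `ψ (a ^ q ^ n)` and `ψ (a ^ q ^ n * c)`
are conjugate in `P`. -/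
theorem isConj_image_pow_in_finite_pGroup
    (p q : ℕ) (hp : p.Prime) (hq : q.Prime) (hpq : p ≠ q) (n : ℕ) (hn : 1 ≤ n)
    (G : Type) [Group G] (a b c : G)
    (hc : c ∈ Subgroup.center G) (hb : b⁻¹ * a * b = a * c)
    (P : Type) [Group P] [Fintype P] (hP : IsPGroup p P) (ψ : G →* P) :
    IsConj (ψ (a ^ q ^ n)) (ψ (a ^ q ^ n * c)) :=
  isConj_image_pow_in_finite_pGroup_general p q hp hq hpq n G a b c hc hb P hP ψ
end

section
/- Let G be a group with a normal subgroup F such that the quotient group G/F is abelian, let N be a normal subgroup of G with N ∩ F = 1, and let a ∈ G and f ∈ F with b = af. If a and b are not conjugate in G, then the cosets aN and bN are not conjugate in the quotient group G/N. -/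
/-! A conjugation `g a g⁻¹ = b` modulo `N` is an actual conjugation in `G`: the element
`(g a g⁻¹)⁻¹ b` lies in `N`, and it also lies in `F` because `G ⧸ F` is abelian and
`f ∈ F`, so it is trivial. -/

namespace QuotientGroup

variable {G : Type*} [Group G]

theorem eq_of_mk_eq_of_inf_eq_bot {N F : Subgroup G} (hNF : N ⊓ F = ⊥) {x y : G}
    (hN : (x : G ⧸ N) = y) (hF : (x : G ⧸ F) = y) : x = y := by
  have hmem : x⁻¹ * y ∈ N ⊓ F :=
    Subgroup.mem_inf.mpr ⟨QuotientGroup.eq.mp hN, QuotientGroup.eq.mp hF⟩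
  rwa [hNF, Subgroup.mem_bot, inv_mul_eq_one] at hmem

theorem mk_conj_eq_of_forall_mul_comm {F : Subgroup G} [F.Normal]
    (hF : ∀ x y : G ⧸ F, x * y = y * x) (g a : G) : ((g * a * g⁻¹ : G) : G ⧸ F) = a := by
  rw [mk_mul, mk_mul, hF (g : G ⧸ F), mk_inv, mul_inv_cancel_right]

end QuotientGroup

/-- Let `G` be a group with a normal subgroup `F` such that `G ⧸ F` is abelian, let `N`
be a normal subgroup of `G` with `N ⊓ F = ⊥`, and let `a ∈ G`, `f ∈ F`, `b = a * f`.
If `a` and `b` are not conjugate in `G`, then the cosets of `a` and `b` are not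
conjugate in `G ⧸ N`. -/
theorem not_isConj_quotient_of_not_isConj
    (G : Type) [Group G] (F N : Subgroup G) [F.Normal] [N.Normal]
    (hab : ∀ x y : G ⧸ F, x * y = y * x) (hNF : N ⊓ F = ⊥)
    (a f b : G) (hf : f ∈ F) (hb : b = a * f)
    (h : ¬ IsConj a b) :
    ¬ IsConj (QuotientGroup.mk a : G ⧸ N) (QuotientGroup.mk b : G ⧸ N) := by
  intro hc
  obtain ⟨c, hc⟩ := isConj_iff.mp hc
  obtain ⟨g, rfl⟩ := QuotientGroup.mk_surjective c
  have hbF : (b : G ⧸ F) = a := by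
    rw [hb, QuotientGroup.mk_mul, (QuotientGroup.eq_one_iff f).mpr hf, mul_one]
  refine h (isConj_iff.mpr ⟨g, QuotientGroup.eq_of_mk_eq_of_inf_eq_bot hNF ?_ ?_⟩)
  · simpa using hc
  · rw [QuotientGroup.mk_conj_eq_of_forall_mul_comm hab, hbF]
end
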